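/- For toy graph (c) — blue bridge b adjacent to red bridge r, with n blue leaves attached to b, and on the red side a 3-level chain structure: r adjacent to n red nodes, each of those adjacent to one blue node, each of those blue nodes adjacent to one red pendant — the 1-hop structural bias equals NB^(1) = (n² − n + 2)/(2(n+1)(2n+1)). -/

import Mathlib

/-!
No vertex of the graph is isolated, so both exposures are averages over a whole colour class,
and each class has `2n + 1` vertices. The fraction of same-coloured neighbours is `n/(n+1)` at
either bridge, `1` at a blue leaf, `0` at `yᵢ`, `1/2` at `xᵢ` and `0` at `zᵢ`; hence
`φ₀₀ + φ₁₁ - 1 = -(n² - n + 2)/(2(n+1)(2n+1))`.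
-/

open Finset
open scoped Classical

/-- The set of nodes at shortest-path distance exactly `k` from `v`. -/
noncomputable def Nk {V : Type*} [Fintype V] (G : SimpleGraph V) (k : ℕ) (v : V) : Finset V :=
  Finset.univ.filter (fun w => G.dist v w = k)

/-- Nodes of sensitive group `s` having a nonempty `k`-hop neighborhood. -/
noncomputable def Vk {V : Type*} [Fintype V] (G : SimpleGraph V) (S : V → Bool) (k : ℕ)
    (s : Bool) : Finset V :=
  Finset.univ.filter (fun v => S v = s ∧ (Nk G k v).Nonempty)

/-- `k`-hop group exposure: average over group-`s` nodes (with nonempty `k`-hop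
neighborhood) of the fraction of their `k`-hop neighbors in group `s'`. -/
noncomputable def phi {V : Type*} [Fintype V] (G : SimpleGraph V) (S : V → Bool) (k : ℕ)
    (s s' : Bool) : ℝ :=
  (∑ v ∈ Vk G S k s,
      (((Nk G k v).filter (fun w => S w = s')).card : ℝ) / ((Nk G k v).card : ℝ)) /
    ((Vk G S k s).card : ℝ)

/-- Binary-attribute `k`-hop structural bias `NB^(k) = |φ_{0→0} + φ_{1→1} − 1|`. -/
noncomputable def NB {V : Type*} [Fintype V] (G : SimpleGraph V) (S : V → Bool) (k : ℕ) : ℝ :=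
  |phi G S k false false + phi G S k true true - 1|

/-- Vertices of toy graph (c): `Sum.inl x` is the bridge node of color `x`
(`false` = blue, `true` = red); `Sum.inr (Sum.inl i)` is the `i`-th blue pendant leaf
on the blue bridge; `Sum.inr (Sum.inr (i, l))` is the `l`-th node of the `i`-th chain
on the red side (`l = 0`: red node `xᵢ` adjacent to the red bridge, `l = 1`: blue node
`yᵢ`, `l = 2`: red pendant `zᵢ`). -/
abbrev Vc (n : ℕ) := Bool ⊕ (Fin n ⊕ (Fin n × Fin 3))

def relC (n : ℕ) : Vc n → Vc n → Prop
  | Sum.inl _, Sum.inl _ => True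
  | Sum.inl x, Sum.inr (Sum.inl _) => x = false
  | Sum.inl x, Sum.inr (Sum.inr p) => x = true ∧ p.2 = 0
  | Sum.inr (Sum.inr p), Sum.inr (Sum.inr q) => p.1 = q.1 ∧ (q.2 : ℕ) = (p.2 : ℕ) + 1
  | _, _ => False

/-- Toy graph (c). -/
def Gc (n : ℕ) : SimpleGraph (Vc n) := SimpleGraph.fromRel (relC n)

/-- Colors in toy graph (c). -/
def Sc (n : ℕ) : Vc n → Bool
  | Sum.inl x => x
  | Sum.inr (Sum.inl _) => false
  | Sum.inr (Sum.inr p) => if p.2 = 1 then false else true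

section Exposure
variable {V : Type*} [Fintype V] (G : SimpleGraph V)

theorem Nk_one (v : V) : Nk G 1 v = univ.filter (G.Adj v) := by
  ext w
  simp [Nk, SimpleGraph.dist_eq_one_iff_adj]

theorem Vk_of_forall_nonempty (S : V → Bool) {k : ℕ} (h : ∀ v, (Nk G k v).Nonempty) (s : Bool) :
    Vk G S k s = univ.filter (S · = s) := by
  simp [Vk, h]

end Exposure

namespace Gc
variable (n : ℕ)

@[simp] theorem Sc_inl (x : Bool) : Sc n (.inl x) = x := rfl
@[simp] theorem Sc_leaf (i : Fin n) : Sc n (.inr (.inl i)) = false := rfl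
@[simp] theorem Sc_chain (p : Fin n × Fin 3) :
    Sc n (.inr (.inr p)) = if p.2 = 1 then false else true := rfl

theorem leaf_injective : Function.Injective fun i : Fin n => (.inr (.inl i) : Vc n) :=
  Sum.inr_injective.comp Sum.inl_injective

theorem chainHead_injective : Function.Injective fun i : Fin n => (.inr (.inr (i, 0)) : Vc n) :=
  fun _ _ h => by simpa using h

theorem Nk_one_blueBridge :
    Nk (Gc n) 1 (.inl false) = insert (.inl true) (univ.image fun i => .inr (.inl i)) := by
  ext w
  rcases w with x | j | ⟨j, l⟩ <;> simp [Nk_one, Gc, relC]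

theorem Nk_one_redBridge :
    Nk (Gc n) 1 (.inl true) = insert (.inl false) (univ.image fun i => .inr (.inr (i, 0))) := by
  ext w
  rcases w with x | j | ⟨j, l⟩ <;> simp [Nk_one, Gc, relC, eq_comm]

theorem Nk_one_leaf (i : Fin n) : Nk (Gc n) 1 (.inr (.inl i)) = {.inl false} := by
  ext w
  rcases w with x | j | ⟨j, l⟩ <;> simp [Nk_one, Gc, relC]

theorem Nk_one_chain_zero (i : Fin n) :
    Nk (Gc n) 1 (.inr (.inr (i, 0))) = {.inl true, .inr (.inr (i, 1))} := by
  ext w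
  rcases w with x | j | ⟨j, l⟩ <;> [skip; skip; fin_cases l] <;> simp [Nk_one, Gc, relC, eq_comm]

theorem Nk_one_chain_one (i : Fin n) :
    Nk (Gc n) 1 (.inr (.inr (i, 1))) = {.inr (.inr (i, 0)), .inr (.inr (i, 2))} := by
  ext w
  rcases w with x | j | ⟨j, l⟩ <;> [skip; skip; fin_cases l] <;> simp [Nk_one, Gc, relC, eq_comm]

theorem Nk_one_chain_two (i : Fin n) :
    Nk (Gc n) 1 (.inr (.inr (i, 2))) = {.inr (.inr (i, 1))} := by
  ext w
  rcases w with x | j | ⟨j, l⟩ <;> [skip; skip; fin_cases l] <;> simp [Nk_one, Gc, relC, eq_comm]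

theorem Nk_one_nonempty (v : Vc n) : (Nk (Gc n) 1 v).Nonempty := by
  rcases v with (_ | _) | i | ⟨i, l⟩
  · simp [Nk_one_blueBridge]
  · simp [Nk_one_redBridge]
  · simp [Nk_one_leaf]
  · fin_cases l <;> simp [Nk_one_chain_zero, Nk_one_chain_one, Nk_one_chain_two]

theorem card_colorClass (s : Bool) : (univ.filter (Sc n · = s)).card = 2 * n + 1 := by
  rw [card_filter, Fintype.sum_sum_type, Fintype.sum_sum_type, Fintype.sum_prod_type]
  cases s <;> simp [Fin.sum_univ_three] <;> ring

theorem sum_sameColorFraction_blue :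
    ∑ v ∈ univ.filter (Sc n · = false),
      (((Nk (Gc n) 1 v).filter (Sc n · = false)).card : ℝ) / (Nk (Gc n) 1 v).card
      = n / (n + 1) + n := by
  rw [sum_filter, Fintype.sum_sum_type, Fintype.sum_sum_type, Fintype.sum_prod_type]
  simp [Nk_one_blueBridge, Nk_one_leaf, Nk_one_chain_one,
    filter_insert, filter_singleton, filter_image, card_image_of_injective _ (leaf_injective n)]

theorem sum_sameColorFraction_red :
    ∑ v ∈ univ.filter (Sc n · = true),
      (((Nk (Gc n) 1 v).filter (Sc n · = true)).card : ℝ) / (Nk (Gc n) 1 v).card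
      = n / (n + 1) + n / 2 := by
  rw [sum_filter, Fintype.sum_sum_type, Fintype.sum_sum_type, Fintype.sum_prod_type]
  simp [Fin.sum_univ_three, Nk_one_redBridge, Nk_one_chain_zero, Nk_one_chain_two,
    filter_insert, filter_singleton, filter_image, card_image_of_injective _ (chainHead_injective n)]
  ring

theorem phi_false_false :
    phi (Gc n) (Sc n) 1 false false = (n / (n + 1) + n) / (2 * n + 1) := by
  rw [phi, Vk_of_forall_nonempty _ _ (Nk_one_nonempty n), sum_sameColorFraction_blue,
    card_colorClass]
  push_cast
  rfl

theorem phi_true_true :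
    phi (Gc n) (Sc n) 1 true true = (n / (n + 1) + n / 2) / (2 * n + 1) := by
  rw [phi, Vk_of_forall_nonempty _ _ (Nk_one_nonempty n), sum_sameColorFraction_red,
    card_colorClass]
  push_cast
  rfl

end Gc

theorem stmt9_general (n : ℕ) :
    NB (Gc n) (Sc n) 1 =
      ((n : ℝ) ^ 2 - (n : ℝ) + 2) / (2 * ((n : ℝ) + 1) * (2 * (n : ℝ) + 1)) := by
  have hsum : ((n : ℝ) / (n + 1) + n) / (2 * n + 1) + (n / (n + 1) + n / 2) / (2 * n + 1) - 1 =
      -(((n : ℝ) ^ 2 - n + 2) / (2 * (n + 1) * (2 * n + 1))) := by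
    field_simp
    ring
  rw [NB, Gc.phi_false_false, Gc.phi_true_true, hsum, abs_neg, abs_of_nonneg]
  exact div_nonneg (by nlinarith [sq_nonneg ((n : ℝ) - 1)]) (by positivity)

/-- for toy graph (c) — blue bridge with `n` blue pendant leaves,
adjacent to a red bridge carrying `n` chains red–blue–red — the 1-hop structural bias
equals `NB^(1) = (n² − n + 2)/(2(n+1)(2n+1))`. -/
theorem stmt9 (n : ℕ) (hn : 0 < n) :
    NB (Gc n) (Sc n) 1 =
      ((n : ℝ) ^ 2 - (n : ℝ) + 2) / (2 * ((n : ℝ) + 1) * (2 * (n : ℝ) + 1)) :=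
  stmt9_general n
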